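/- Let F be a one-dimensional commutative formal group law over a commutative ring R, with a₁₁, a₁₂, a₁₃, a₂₂ the coefficients of xy, x²y, x³y, x²y² in F, let ι be its formal inverse, let g be the unique series with F(x,y) = x + y - xy·g(x,y), and let r be the unique series with F(x,y) = y + x·r(x,y). Then the series r(x -_F y, y) + y·g(x -_F y, y -_F x) and 1 + a₁₂xy + (a₂₂ - a₁₂a₁₁)xy(x - y) + a₁₃xy(2y - x) have equal coefficients in all total degrees < 4. -/

import Mathlib

/-!
Formal group law preliminaries: substitution of (multivariate) formal power series,
the definition of a one-dimensional commutative formal group law, its formal inverse,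
and the formal difference `x -_F y := F(x, ι(y))`.
-/

noncomputable section

open MvPowerSeries

/-- Substitution `f(a 0, a 1, …)` of multivariate power series (the intended use is when
each `a i` has zero constant coefficient): the coefficient at `e` only receives
contributions from monomials of `f` with exponent `d` such that each `d i` is at most the
total degree of `e`. -/
def MvPowerSeries.substSeries {σ τ R : Type*} [Fintype σ] [DecidableEq σ] [CommRing R]
    (a : σ → MvPowerSeries τ R) (f : MvPowerSeries σ R) : MvPowerSeries τ R :=
  fun e => ∑ d ∈ Finset.Iic (Finsupp.equivFunOnFinite.symm fun _ : σ => e.sum fun _ n => n),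
    MvPowerSeries.coeff (R := R) d f * MvPowerSeries.coeff (R := R) e (∏ i, (a i) ^ d i)

/-- A one-dimensional commutative formal group law over a commutative ring `R`:
a power series `F ∈ R[[x,y]]` with `F(x,0) = x`, `F(0,y) = y`, `F(x,y) = F(y,x)` and
`F(F(x,y),z) = F(x,F(y,z))` (an identity of power series in `R[[x,y,z]]`). -/
structure IsFormalGroupLaw (R : Type*) [CommRing R] (F : MvPowerSeries (Fin 2) R) : Prop where
  subst_zero_right :
    MvPowerSeries.substSeries (![X 0, 0] : Fin 2 → MvPowerSeries (Fin 2) R) F = X 0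
  subst_zero_left :
    MvPowerSeries.substSeries (![0, X 1] : Fin 2 → MvPowerSeries (Fin 2) R) F = X 1
  comm :
    MvPowerSeries.substSeries (![X 1, X 0] : Fin 2 → MvPowerSeries (Fin 2) R) F = F
  assoc :
    MvPowerSeries.substSeries
      (![MvPowerSeries.substSeries (![X 0, X 1] : Fin 2 → MvPowerSeries (Fin 3) R) F, X 2] :
        Fin 2 → MvPowerSeries (Fin 3) R) F
    = MvPowerSeries.substSeries
      (![X 0, MvPowerSeries.substSeries (![X 1, X 2] : Fin 2 → MvPowerSeries (Fin 3) R) F] :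
        Fin 2 → MvPowerSeries (Fin 3) R) F

/-- `ι` is the formal inverse of the formal group law `F`: a univariate power series with
zero constant term such that `F(x, ι(x)) = 0`. -/
def IsFormalInverse {R : Type*} [CommRing R] (F : MvPowerSeries (Fin 2) R)
    (ι : PowerSeries R) : Prop :=
  PowerSeries.constantCoeff (R := R) ι = 0 ∧
    MvPowerSeries.substSeries (![PowerSeries.X, ι] : Fin 2 → PowerSeries R) F = 0

/-- The formal difference `x -_F y := F(x, ι(y))`. -/
def fDiff {R : Type*} [CommRing R] (F : MvPowerSeries (Fin 2) R) (ι : PowerSeries R) :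
    MvPowerSeries (Fin 2) R :=
  MvPowerSeries.substSeries
    (![X 0, MvPowerSeries.substSeries (fun _ : Unit => (X 1 : MvPowerSeries (Fin 2) R)) ι] :
      Fin 2 → MvPowerSeries (Fin 2) R) F

/-- The formal difference `y -_F x := F(y, ι(x))`. -/
def fDiffSwap {R : Type*} [CommRing R] (F : MvPowerSeries (Fin 2) R) (ι : PowerSeries R) :
    MvPowerSeries (Fin 2) R :=
  MvPowerSeries.substSeries
    (![X 1, MvPowerSeries.substSeries (fun _ : Unit => (X 0 : MvPowerSeries (Fin 2) R)) ι] :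
      Fin 2 → MvPowerSeries (Fin 2) R) F
/-!
Cancelling `x` in `y + x·r = F = x + y - xy·g` gives `r = 1 - y·g`, so with `D = x -_F y` and
`E = y -_F x` the series in question is `1 + y·(g(D, E) - g(D, y))`. Modulo degree 3,
`g(u, v) - g(u, w) = (v - w)(g₀₁ + g₀₂(v + w) + g₁₁u)` with `gᵢⱼ` the coefficients of `g`, so
only `D` modulo degree 2 and `E` modulo degree 3 matter. Both come from
`ι ≡ -x - g₀₀x²` (modulo degree 3), obtained by iterating `ι = -x + x·ι·g(x, ι)`, which is
`F(x, ι(x)) = 0`. Finally `gᵢⱼ` is minus the coefficient of `xⁱ⁺¹yʲ⁺¹` in `F`, and the symmetry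
of `F` turns `g₀₁, g₀₂` into `-a₁₂, -a₁₃`.
-/

namespace MvPowerSeries

variable {σ τ R : Type*} [CommRing R]

theorem coeff_prod_pow_eq_zero_of_degree_lt [Fintype σ] {a : σ → MvPowerSeries τ R}
    (ha : ∀ i, constantCoeff (a i) = 0) {d : σ →₀ ℕ} {e : τ →₀ ℕ}
    (hde : e.degree < d.degree) : coeff e (∏ i, a i ^ d i) = 0 := by
  refine coeff_of_lt_order (lt_of_lt_of_le ?_ (le_order_prod _ _))
  calc (e.degree : ℕ∞) < d.degree := by exact_mod_cast hde
    _ = ∑ i, (d i : ℕ∞) := by simp [Finsupp.degree_eq_sum]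
    _ ≤ ∑ i, (a i ^ d i).order :=
      Finset.sum_le_sum fun i _ => le_order_pow_of_constantCoeff_eq_zero _ (ha i)

theorem substSeries_eq_subst [Fintype σ] [DecidableEq σ] {a : σ → MvPowerSeries τ R}
    (ha : ∀ i, constantCoeff (a i) = 0) (f : MvPowerSeries σ R) :
    substSeries a f = subst a f := by
  ext e
  rw [coeff_subst (hasSubst_of_constantCoeff_zero ha), finsum_eq_sum_of_support_subset]
  · refine Finset.sum_congr rfl fun d _ => ?_
    rw [Finsupp.prod_fintype _ _ (fun _ => pow_zero _), smul_eq_mul]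
  · intro d hd
    rw [Function.mem_support, Finsupp.prod_fintype _ _ (fun _ => pow_zero _)] at hd
    have hde : d.degree ≤ e.degree := by
      by_contra h
      exact hd (by rw [coeff_prod_pow_eq_zero_of_degree_lt ha (not_le.mp h), smul_zero])
    simp only [Finset.coe_Iic, Set.mem_Iic, Finsupp.le_def]
    exact fun i => (Finsupp.le_degree i d).trans hde

def ModDeg (n : ℕ) (φ ψ : MvPowerSeries σ R) : Prop := (n : ℕ∞) ≤ (φ - ψ).order

notation:50 φ " ≡[" n "] " ψ:51 => ModDeg n φ ψ

namespace ModDeg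

variable {m n : ℕ} {φ φ' ψ ψ' χ : MvPowerSeries σ R}

theorem zero_iff : φ ≡[n] 0 ↔ (n : ℕ∞) ≤ φ.order := by
  rw [ModDeg, sub_zero]

theorem one_zero_iff : φ ≡[1] 0 ↔ constantCoeff φ = 0 := by
  rw [zero_iff, Nat.cast_one, one_le_order_iff_constCoeff_eq_zero]

theorem refl (n : ℕ) (φ : MvPowerSeries σ R) : φ ≡[n] φ := by
  simp [ModDeg]

theorem deg_zero (φ ψ : MvPowerSeries σ R) : φ ≡[0] ψ := by
  simp [ModDeg]

theorem of_eq (h : φ = ψ) : φ ≡[n] ψ := h ▸ refl n φ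

theorem of_sub (h : φ - ψ ≡[n] 0) : φ ≡[n] ψ := by
  rwa [ModDeg, sub_zero] at h

theorem mono (h : φ ≡[n] ψ) (hmn : m ≤ n) : φ ≡[m] ψ :=
  le_trans (by exact_mod_cast hmn) h

theorem add (hφ : φ ≡[n] φ') (hψ : ψ ≡[n] ψ') : φ + ψ ≡[n] φ' + ψ' := by
  unfold ModDeg
  rw [add_sub_add_comm]
  exact (le_min hφ hψ).trans min_order_le_add

theorem neg (h : φ ≡[n] ψ) : -φ ≡[n] -ψ := by
  rwa [ModDeg, neg_sub_neg, ← neg_sub, order_neg]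

theorem sub (hφ : φ ≡[n] φ') (hψ : ψ ≡[n] ψ') : φ - ψ ≡[n] φ' - ψ' := by
  simpa only [sub_eq_add_neg] using hφ.add hψ.neg

theorem trans (hφ : φ ≡[n] ψ) (hψ : ψ ≡[n] χ) : φ ≡[n] χ := by
  have h := hφ.add hψ
  unfold ModDeg at h ⊢
  convert h using 2
  ring

instance : @Trans (MvPowerSeries σ R) _ _ (ModDeg n) (ModDeg n) (ModDeg n) := ⟨trans⟩

theorem mul_of_zero {a b : ℕ} (hφ : φ ≡[a] 0) (hψ : ψ ≡[b] 0) :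
    φ * ψ ≡[a + b] 0 := by
  rw [zero_iff] at *
  push_cast
  exact (add_le_add hφ hψ).trans le_order_mul

theorem mul {a : ℕ} (hφ : φ ≡[a + n] φ') (hψ : ψ ≡[n] ψ') (hφ₀ : φ ≡[a] 0) :
    φ * ψ ≡[a + n] φ' * ψ' := by
  have h₁ : φ * (ψ - ψ') ≡[a + n] 0 := hφ₀.mul_of_zero (zero_iff.2 hψ)
  have h₂ : (φ - φ') * ψ' ≡[a + n + 0] 0 := (zero_iff.2 hφ).mul_of_zero (deg_zero _ _)
  refine of_sub ?_
  convert h₁.add h₂ using 1 <;> ring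

theorem coeff_eq (h : φ ≡[n] ψ) {d : σ →₀ ℕ} (hd : d.degree < n) :
    coeff d φ = coeff d ψ :=
  sub_eq_zero.1 <| by
    rw [← map_sub]
    exact coeff_of_lt_order (lt_of_lt_of_le (by exact_mod_cast hd) h)

theorem constantCoeff_eq (h : φ ≡[n + 1] ψ) : constantCoeff φ = constantCoeff ψ := by
  simpa using h.coeff_eq (d := 0) (by simp)

theorem of_coeff_eq (h : ∀ d : σ →₀ ℕ, d.degree < n → coeff d φ = coeff d ψ) :
    φ ≡[n] ψ :=
  nat_le_order fun d hd => by rw [map_sub, h d hd, sub_self]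

theorem subst [Finite σ] {a : σ → MvPowerSeries τ R} (ha : ∀ i, constantCoeff (a i) = 0)
    (h : φ ≡[n] ψ) : subst a φ ≡[n] subst a ψ := by
  have hsub := hasSubst_of_constantCoeff_zero ha
  have ha₁ : 1 ≤ ⨅ i, (a i).order :=
    le_iInf fun i => one_le_order_iff_constCoeff_eq_zero.2 (ha i)
  unfold ModDeg at h ⊢
  rw [← subst_sub hsub]
  calc (n : ℕ∞) ≤ 1 * (φ - ψ).order := by rwa [one_mul]
    _ ≤ (⨅ i, (a i).order) * (φ - ψ).order := mul_le_mul_left ha₁ _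
    _ ≤ _ := le_order_subst hsub _

end ModDeg

theorem modDeg_one_C_constantCoeff (φ : MvPowerSeries σ R) :
    φ ≡[1] C (constantCoeff φ) := by
  rw [ModDeg, Nat.cast_one, one_le_order_iff_constCoeff_eq_zero, map_sub, constantCoeff_C,
    sub_self]

end MvPowerSeries

open Finsupp

section TwoVariables

variable {R τ : Type*} [CommRing R]

theorem eq_single_add_single (d : Fin 2 →₀ ℕ) : d = single 0 (d 0) + single 1 (d 1) := by
  ext k
  fin_cases k <;> simp

theorem coeff_C_mul_X_pow_mul_X_pow (d : Fin 2 →₀ ℕ) (c : R) (i j : ℕ) :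
    coeff d (C c * X 0 ^ i * X 1 ^ j) = if d 0 = i ∧ d 1 = j then c else 0 := by
  rw [mul_assoc, coeff_C_mul, X_pow_eq, X_pow_eq, monomial_mul_monomial, coeff_monomial, one_mul]
  conv_lhs => rw [eq_single_add_single d]
  simp [Finsupp.ext_iff, Fin.forall_fin_two]

theorem modDeg_sum_C_coeff_mul_X_pow (φ : MvPowerSeries (Fin 2) R) (n : ℕ) :
    φ ≡[n] ∑ i ∈ Finset.range n, ∑ j ∈ Finset.range (n - i),
      C (coeff (single 0 i + single 1 j) φ) * X 0 ^ i * X 1 ^ j := by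
  refine ModDeg.of_coeff_eq fun d hd => ?_
  have hd' : d 0 + d 1 < n := by simpa [degree_eq_sum, Fin.sum_univ_two] using hd
  simp only [map_sum, coeff_C_mul_X_pow_mul_X_pow]
  rw [Finset.sum_eq_single (d 0), Finset.sum_eq_single (d 1)]
  · simp [← eq_single_add_single]
  · intro j _ hj
    simp [Ne.symm hj]
  · exact fun h => absurd (Finset.mem_range.2 (by omega)) h
  · intro i _ hi
    simp [Ne.symm hi]
  · exact fun h => absurd (Finset.mem_range.2 (by omega)) h

theorem subst_sub_subst_modDeg_three (φ : MvPowerSeries (Fin 2) R) {u v w : MvPowerSeries τ R}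
    (hu : constantCoeff u = 0) (hv : constantCoeff v = 0) (hw : constantCoeff w = 0) :
    subst ![u, v] φ - subst ![u, w] φ ≡[3]
      (v - w) * (C (coeff (single 0 0 + single 1 1) φ)
        + C (coeff (single 0 0 + single 1 2) φ) * (v + w)
        + C (coeff (single 0 1 + single 1 1) φ) * u) := by
  have huv : ∀ i, constantCoeff ((![u, v] : Fin 2 → MvPowerSeries τ R) i) = 0 := by
    intro i; fin_cases i; exacts [hu, hv]
  have huw : ∀ i, constantCoeff ((![u, w] : Fin 2 → MvPowerSeries τ R) i) = 0 := by
    intro i; fin_cases i; exacts [hu, hw]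
  have hT := modDeg_sum_C_coeff_mul_X_pow φ 3
  refine ((hT.subst huv).sub (hT.subst huw)).trans (ModDeg.of_eq ?_)
  have h₁ := hasSubst_of_constantCoeff_zero huv
  have h₂ := hasSubst_of_constantCoeff_zero huw
  simp only [Finset.sum_range_succ, Finset.sum_range_zero, zero_add, subst_add h₁, subst_mul h₁,
    subst_pow h₁, subst_X h₁, subst_add h₂, subst_mul h₂, subst_pow h₂, subst_X h₂, subst_C,
    Matrix.cons_val_zero, Matrix.cons_val_one, Matrix.cons_val_fin_one]
  ring

theorem X_mul_subst_sub_subst_modDeg_four (φ : MvPowerSeries (Fin 2) R) (c : R)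
    {D E : MvPowerSeries (Fin 2) R} (hD : D ≡[2] X 0 - X 1) (hE₂ : E ≡[2] X 1 - X 0)
    (hE₃ : E ≡[3] (X 1 - X 0) * (1 + C c * X 0)) :
    X 1 * (subst ![D, E] φ - subst ![D, X 1] φ) ≡[4]
      X 1 * ((X 1 - X 0) * (1 + C c * X 0) - X 1) *
        (C (coeff (single 0 0 + single 1 1) φ)
          + C (coeff (single 0 0 + single 1 2) φ) * (2 * X 1 - X 0)
          + C (coeff (single 0 1 + single 1 1) φ) * (X 0 - X 1)) := by
  have hX₁ : (X 1 : MvPowerSeries (Fin 2) R) ≡[1] 0 := ModDeg.one_zero_iff.2 (by simp)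
  have hD₀ : constantCoeff D = 0 := by simpa using hD.constantCoeff_eq
  have hE₀ : constantCoeff E = 0 := by simpa using hE₂.constantCoeff_eq
  calc X 1 * (subst ![D, E] φ - subst ![D, X 1] φ)
      ≡[4] X 1 * ((E - X 1) * (C (coeff (single 0 0 + single 1 1) φ)
          + C (coeff (single 0 0 + single 1 2) φ) * (E + X 1)
          + C (coeff (single 0 1 + single 1 1) φ) * D)) :=
        (ModDeg.refl _ _).mul (subst_sub_subst_modDeg_three φ hD₀ hE₀ (by simp)) hX₁
    _ = X 1 * (E - X 1) * (C (coeff (single 0 0 + single 1 1) φ)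
          + C (coeff (single 0 0 + single 1 2) φ) * (E + X 1)
          + C (coeff (single 0 1 + single 1 1) φ) * D) := by ring
    _ ≡[4] X 1 * ((X 1 - X 0) * (1 + C c * X 0) - X 1) *
          (C (coeff (single 0 0 + single 1 1) φ)
          + C (coeff (single 0 0 + single 1 2) φ) * (X 1 - X 0 + X 1)
          + C (coeff (single 0 1 + single 1 1) φ) * (X 0 - X 1)) :=
      ModDeg.mul (a := 2) ((ModDeg.refl _ _).mul (a := 1) (hE₃.sub (ModDeg.refl _ _)) hX₁)
        (((ModDeg.refl _ _).add ((ModDeg.refl _ _).mul (a := 0) (hE₂.add (ModDeg.refl _ _))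
          (ModDeg.deg_zero _ _))).add ((ModDeg.refl _ _).mul (a := 0) hD (ModDeg.deg_zero _ _)))
        (hX₁.mul_of_zero (ModDeg.one_zero_iff.2 (by simp [hE₀])))
    _ = _ := by ring

theorem X_mul_X_mul_sub_mul_modDeg_four {L : MvPowerSeries (Fin 2) R}
    (hL : constantCoeff L = 0) : X 0 * X 1 * (X 0 - X 1) * L ≡[4] 0 :=
  (((ModDeg.one_zero_iff.2 (constantCoeff_X 0)).mul_of_zero
    (ModDeg.one_zero_iff.2 (constantCoeff_X 1))).mul_of_zero
    (ModDeg.one_zero_iff.2 (by simp))).mul_of_zero (ModDeg.one_zero_iff.2 hL)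

theorem coeff_subst_swap (φ : MvPowerSeries (Fin 2) R) (i j : ℕ) :
    coeff (single 0 i + single 1 j) (subst (![X 1, X 0] : Fin 2 → MvPowerSeries (Fin 2) R) φ) =
      coeff (single 0 j + single 1 i) φ := by
  have hswap : subst (![X 1, X 0] : Fin 2 → MvPowerSeries (Fin 2) R) φ =
      rename (Equiv.swap (0 : Fin 2) 1).toEmbedding φ := by
    rw [rename_eq_subst]
    congr 1
    ext k : 1
    fin_cases k <;> simp
  rw [hswap]
  convert coeff_embDomain_rename (Equiv.swap (0 : Fin 2) 1).toEmbedding φ _ using 2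
  simp [embDomain_add, embDomain_single, add_comm]

end TwoVariables

section FormalGroupLaw

variable {R τ : Type*} [CommRing R] {F g : MvPowerSeries (Fin 2) R} {ι : PowerSeries R}

theorem subst_eq_of_eq_X_add_X_sub (hg : F = X 0 + X 1 - X 0 * X 1 * g)
    {a : Fin 2 → MvPowerSeries τ R} (ha : HasSubst a) :
    subst a F = a 0 + a 1 - a 0 * a 1 * subst a g := by
  rw [hg, subst_sub ha, subst_add ha, subst_mul ha, subst_mul ha, subst_X ha, subst_X ha]

theorem coeff_eq_neg_coeff_of_eq_X_add_X_sub (hg : F = X 0 + X 1 - X 0 * X 1 * g) (i j : ℕ) :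
    coeff (single 0 i + single 1 j) g = -coeff (single 0 (i + 1) + single 1 (j + 1)) F := by
  have hXX : (X 0 * X 1 : MvPowerSeries (Fin 2) R) = monomial (single 0 1 + single 1 1) 1 := by
    rw [X_def, X_def, monomial_mul_monomial, one_mul]
  have hidx : (single 0 (i + 1) + single 1 (j + 1) : Fin 2 →₀ ℕ) =
      (single 0 1 + single 1 1) + (single 0 i + single 1 j) := by
    ext k; fin_cases k <;> simp [add_comm]
  rw [hg, hidx, hXX, map_sub, coeff_add_monomial_mul, one_mul, map_add, coeff_X, coeff_X]
  simp [Finsupp.ext_iff, Fin.forall_fin_two]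

theorem eq_one_sub_X_mul_of_eq {r : MvPowerSeries (Fin 2) R}
    (hg : F = X 0 + X 1 - X 0 * X 1 * g) (hr : F = X 1 + X 0 * r) : r = 1 - X 1 * g := by
  have h : X 0 * r = X 0 * (1 - X 1 * g) := by linear_combination hr.symm.trans hg
  exact sub_eq_zero.1 (X_mem_nonzeroDivisors.1 _ (by rw [mul_sub, h, sub_self]))

theorem IsFormalGroupLaw.coeff_swap (hF : IsFormalGroupLaw R F) (i j : ℕ) :
    coeff (single 0 i + single 1 j) F = coeff (single 0 j + single 1 i) F := by
  have ha : ∀ k, constantCoeff ((![X 1, X 0] : Fin 2 → MvPowerSeries (Fin 2) R) k) = 0 := by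
    intro k; fin_cases k <;> simp
  rw [← coeff_subst_swap, ← substSeries_eq_subst ha, hF.comm]

theorem IsFormalInverse.constantCoeff_vecCons_X (hι : IsFormalInverse F ι) :
    ∀ i, constantCoeff ((![PowerSeries.X, ι] : Fin 2 → PowerSeries R) i) = 0 := by
  intro i
  fin_cases i
  exacts [PowerSeries.constantCoeff_X, hι.1]

theorem IsFormalInverse.eq_neg_X_add (hg : F = X 0 + X 1 - X 0 * X 1 * g)
    (hι : IsFormalInverse F ι) :
    ι = -PowerSeries.X + PowerSeries.X * ι * subst ![PowerSeries.X, ι] g := by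
  have h := hι.2
  rw [substSeries_eq_subst hι.constantCoeff_vecCons_X, subst_eq_of_eq_X_add_X_sub hg
    (hasSubst_of_constantCoeff_zero hι.constantCoeff_vecCons_X)] at h
  simp only [Matrix.cons_val_zero, Matrix.cons_val_one, Matrix.cons_val_fin_one] at h
  linear_combination h

theorem IsFormalInverse.modDeg_two (hg : F = X 0 + X 1 - X 0 * X 1 * g)
    (hι : IsFormalInverse F ι) : ι ≡[2] -PowerSeries.X :=
  calc ι = -PowerSeries.X + PowerSeries.X * ι * subst ![PowerSeries.X, ι] g :=
        hι.eq_neg_X_add hg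
    _ ≡[2] -PowerSeries.X + 0 :=
      (ModDeg.refl _ _).add (((ModDeg.one_zero_iff.2 PowerSeries.constantCoeff_X).mul_of_zero
        (ModDeg.one_zero_iff.2 hι.1)).mul_of_zero (ModDeg.deg_zero _ 0))
    _ = -PowerSeries.X := add_zero _

theorem IsFormalInverse.modDeg_three (hg : F = X 0 + X 1 - X 0 * X 1 * g)
    (hι : IsFormalInverse F ι) :
    ι ≡[3] -PowerSeries.X - PowerSeries.C (constantCoeff g) * PowerSeries.X ^ 2 := by
  have hh : subst ![PowerSeries.X, ι] g ≡[1] PowerSeries.C (constantCoeff g) := by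
    have h := (modDeg_one_C_constantCoeff g).subst hι.constantCoeff_vecCons_X
    rwa [subst_C] at h
  calc ι = -PowerSeries.X + PowerSeries.X * (ι * subst ![PowerSeries.X, ι] g) :=
        (hι.eq_neg_X_add hg).trans (by ring)
    _ ≡[3] -PowerSeries.X +
          PowerSeries.X * (-PowerSeries.X * PowerSeries.C (constantCoeff g)) :=
      (ModDeg.refl _ _).add ((ModDeg.refl _ _).mul ((hι.modDeg_two hg).mul hh
        (ModDeg.one_zero_iff.2 hι.1)) (ModDeg.one_zero_iff.2 PowerSeries.constantCoeff_X))
    _ = _ := by ring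

theorem IsFormalInverse.formalDiff_modDeg_three (hg : F = X 0 + X 1 - X 0 * X 1 * g)
    (hι : IsFormalInverse F ι) {u v : MvPowerSeries τ R} (hu : constantCoeff u = 0)
    (hv : constantCoeff v = 0) :
    substSeries ![u, substSeries (fun _ : Unit => v) ι] F ≡[3]
      (u - v) * (1 + C (constantCoeff g) * v) := by
  have hv' : ∀ _ : Unit, constantCoeff v = 0 := fun _ => hv
  have hsub : PowerSeries.HasSubst v := PowerSeries.HasSubst.of_constantCoeff_zero hv
  set c := constantCoeff g
  set w := substSeries (fun _ : Unit => v) ι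
  have hw : w = MvPowerSeries.subst (fun _ => v) ι := substSeries_eq_subst hv' ι
  have hw₁ : w ≡[1] 0 := ModDeg.one_zero_iff.2 <| by
    rw [hw, ← PowerSeries.subst_def]
    exact PowerSeries.constantCoeff_subst_eq_zero hv _ hι.1
  have hw₂ : w ≡[2] -v := by
    rw [hw]
    convert (hι.modDeg_two hg).subst hv' using 1
    rw [← PowerSeries.subst_def, ← PowerSeries.coe_substAlgHom hsub, map_neg,
      PowerSeries.substAlgHom_X]
  have hw₃ : w ≡[3] -v - C c * v ^ 2 := by
    rw [hw]
    convert (hι.modDeg_three hg).subst hv' using 1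
    rw [← PowerSeries.subst_def, ← PowerSeries.coe_substAlgHom hsub]
    simp only [map_sub, map_neg, map_mul, map_pow, PowerSeries.substAlgHom_X]
    rw [PowerSeries.coe_substAlgHom hsub, PowerSeries.subst_C]
  have ha : ∀ i, constantCoeff ((![u, w] : Fin 2 → MvPowerSeries τ R) i) = 0 := by
    intro i; fin_cases i; exacts [hu, ModDeg.one_zero_iff.1 hw₁]
  have hk : subst ![u, w] g ≡[1] C c := by
    simpa only [subst_C] using (modDeg_one_C_constantCoeff g).subst ha
  rw [substSeries_eq_subst ha, subst_eq_of_eq_X_add_X_sub hg (hasSubst_of_constantCoeff_zero ha)]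
  simp only [Matrix.cons_val_zero, Matrix.cons_val_one, Matrix.cons_val_fin_one]
  calc u + w - u * w * subst ![u, w] g = u + w - u * (w * subst ![u, w] g) := by ring
    _ ≡[3] u + (-v - C c * v ^ 2) - u * (-v * C c) :=
      ((ModDeg.refl _ _).add hw₃).sub
        ((ModDeg.refl _ _).mul (hw₂.mul hk hw₁) (ModDeg.one_zero_iff.2 hu))
    _ = (u - v) * (1 + C c * v) := by ring

theorem IsFormalInverse.formalDiff_modDeg_two (hg : F = X 0 + X 1 - X 0 * X 1 * g)
    (hι : IsFormalInverse F ι) {u v : MvPowerSeries τ R} (hu : constantCoeff u = 0)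
    (hv : constantCoeff v = 0) :
    substSeries ![u, substSeries (fun _ : Unit => v) ι] F ≡[2] u - v := by
  refine ((hι.formalDiff_modDeg_three hg hu hv).mono (by norm_num)).trans (ModDeg.of_sub ?_)
  rw [show (u - v) * (1 + C (constantCoeff g) * v) - (u - v) =
    (u - v) * (C (constantCoeff g) * v) by ring]
  exact ModDeg.mul_of_zero (ModDeg.one_zero_iff.2 (by simp [hu, hv]))
    (ModDeg.one_zero_iff.2 (by simp [hv]))

theorem substSeries_add_X_mul_substSeries_eq {r D E : MvPowerSeries (Fin 2) R}
    (hg : F = X 0 + X 1 - X 0 * X 1 * g) (hr : F = X 1 + X 0 * r) (hD : constantCoeff D = 0)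
    (hE : constantCoeff E = 0) :
    substSeries ![D, X 1] r + X 1 * substSeries ![D, E] g =
      1 + X 1 * (subst ![D, E] g - subst ![D, X 1] g) := by
  have hDE : ∀ i, constantCoeff ((![D, E] : Fin 2 → MvPowerSeries (Fin 2) R) i) = 0 := by
    intro i; fin_cases i; exacts [hD, hE]
  have hDX : ∀ i, constantCoeff ((![D, X 1] : Fin 2 → MvPowerSeries (Fin 2) R) i) = 0 := by
    intro i; fin_cases i; exacts [hD, constantCoeff_X 1]
  rw [substSeries_eq_subst hDE, substSeries_eq_subst hDX, eq_one_sub_X_mul_of_eq hg hr,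
    ← coe_substAlgHom (hasSubst_of_constantCoeff_zero hDX)]
  simp only [map_sub, map_one, map_mul, substAlgHom_X, Matrix.cons_val_one,
    Matrix.cons_val_fin_one, coe_substAlgHom]
  ring

theorem IsFormalInverse.subst_fDiff_modDeg_four (hg : F = X 0 + X 1 - X 0 * X 1 * g)
    (hι : IsFormalInverse F ι) {r : MvPowerSeries (Fin 2) R} (hr : F = X 1 + X 0 * r) :
    substSeries ![fDiff F ι, X 1] r + X 1 * substSeries ![fDiff F ι, fDiffSwap F ι] g ≡[4]
      1 + X 1 * ((X 1 - X 0) * (1 + C (constantCoeff g) * X 0) - X 1) *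
        (C (coeff (single 0 0 + single 1 1) g)
          + C (coeff (single 0 0 + single 1 2) g) * (2 * X 1 - X 0)
          + C (coeff (single 0 1 + single 1 1) g) * (X 0 - X 1)) := by
  have hD : fDiff F ι ≡[2] X 0 - X 1 := hι.formalDiff_modDeg_two hg (by simp) (by simp)
  have hE₂ : fDiffSwap F ι ≡[2] X 1 - X 0 := hι.formalDiff_modDeg_two hg (by simp) (by simp)
  rw [substSeries_add_X_mul_substSeries_eq hg hr (by simpa using hD.constantCoeff_eq)
    (by simpa using hE₂.constantCoeff_eq)]
  exact (ModDeg.refl _ _).add (X_mul_subst_sub_subst_modDeg_four g _ hD hE₂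
    (hι.formalDiff_modDeg_three hg (by simp) (by simp)))

end FormalGroupLaw

/-- Let `F` be a one-dimensional commutative formal group law over `R`,
with `a₁₁, a₁₂, a₁₃, a₂₂` the coefficients of `xy, x²y, x³y, x²y²` in `F`, `ι` its formal
inverse, `g` the unique series with `F = x + y - xy·g`, and `r` the unique series with
`F = y + x·r`. Then `r(x -_F y, y) + y·g(x -_F y, y -_F x)` and
`1 + a₁₂xy + (a₂₂ - a₁₂a₁₁)xy(x-y) + a₁₃xy(2y-x)` have equal coefficients in all total
degrees `< 4`. -/
theorem fgl_r_add_y_g_mod_deg4 {R : Type*} [CommRing R]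
    (F : MvPowerSeries (Fin 2) R) (hF : IsFormalGroupLaw R F)
    (ι : PowerSeries R) (hι : IsFormalInverse F ι)
    (a₁₁ a₁₂ a₁₃ a₂₂ : R)
    (ha₁₁ : a₁₁ = MvPowerSeries.coeff (R := R) (Finsupp.single 0 1 + Finsupp.single 1 1) F)
    (ha₁₂ : a₁₂ = MvPowerSeries.coeff (R := R) (Finsupp.single 0 2 + Finsupp.single 1 1) F)
    (ha₁₃ : a₁₃ = MvPowerSeries.coeff (R := R) (Finsupp.single 0 3 + Finsupp.single 1 1) F)
    (ha₂₂ : a₂₂ = MvPowerSeries.coeff (R := R) (Finsupp.single 0 2 + Finsupp.single 1 2) F)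
    (g : MvPowerSeries (Fin 2) R) (hg : F = X 0 + X 1 - (X 0 * X 1) * g)
    (r : MvPowerSeries (Fin 2) R) (hr : F = X 1 + X 0 * r) :
    ∀ d : Fin 2 →₀ ℕ, d 0 + d 1 < 4 →
      MvPowerSeries.coeff (R := R) d
        (MvPowerSeries.substSeries
            (![fDiff F ι, X 1] : Fin 2 → MvPowerSeries (Fin 2) R) r
          + X 1 * MvPowerSeries.substSeries
            (![fDiff F ι, fDiffSwap F ι] : Fin 2 → MvPowerSeries (Fin 2) R) g) =
      MvPowerSeries.coeff (R := R) d
        (1 + C (σ := Fin 2) (R := R) a₁₂ * (X 0 * X 1)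
          + C (σ := Fin 2) (R := R) (a₂₂ - a₁₂ * a₁₁) * (X 0 * X 1 * (X 0 - X 1))
          + C (σ := Fin 2) (R := R) a₁₃ * (X 0 * X 1 * (2 * X 1 - X 0))) := by
  have hc₀₀ : constantCoeff g = -a₁₁ := by
    simpa [ha₁₁] using coeff_eq_neg_coeff_of_eq_X_add_X_sub hg 0 0
  have hc₀₁ : coeff (single 0 0 + single 1 1) g = -a₁₂ := by
    rw [coeff_eq_neg_coeff_of_eq_X_add_X_sub hg, hF.coeff_swap, ha₁₂]
  have hc₀₂ : coeff (single 0 0 + single 1 2) g = -a₁₃ := by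
    rw [coeff_eq_neg_coeff_of_eq_X_add_X_sub hg, hF.coeff_swap, ha₁₃]
  have hc₁₁ : coeff (single 0 1 + single 1 1) g = -a₂₂ := by
    rw [coeff_eq_neg_coeff_of_eq_X_add_X_sub hg, ha₂₂]
  intro d hd
  refine ModDeg.coeff_eq ?_ (by simpa [degree_eq_sum] using hd)
  refine (hι.subst_fDiff_modDeg_four hg hr).trans (ModDeg.of_sub ?_)
  convert (X_mul_X_mul_sub_mul_modDeg_four (L := -(C a₁₁ * (C a₁₃ * (2 * X 1 - X 0)
    + C a₂₂ * (X 0 - X 1)))) (by simp)) using 2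
  rw [hc₀₀, hc₀₁, hc₀₂, hc₁₁]
  simp only [map_neg, map_sub, map_mul]
  ring
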